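/- arXiv:2108.09577 — 3 statements merged into one kernel-verified Lean document; each statement's English description precedes it below -/
import Mathlib

section
/- Let R ≥ 1 be an integer and let T ⊂ (1/R)·ℤ be a finite set of N ≥ 2 distinct rational numbers whose denominators divide R. Then the average of B₂ over differences of distinct elements satisfies: (1/(N² − N))·∑_{s,t ∈ T, s ≠ t} B₂(s − t) ≥ 1/(6·R²) − 1/(6·(N − 1)). -/
/-- The periodic second Bernoulli function `B₂(t) = {t}² − {t} + 1/6`. -/
noncomputable def B2 (t : ℝ) : ℝ := Int.fract t ^ 2 - Int.fract t + 1 / 6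

noncomputable def gg (R j : ℤ) : ℝ := ((2 * (j % R) - R + 1 : ℤ) : ℝ) / (2 * R)

lemma gg_periodic (R j : ℤ) : gg R j = gg R (j % R) := by
  unfold gg
  rw [Int.emod_emod_of_dvd _ dvd_rfl]

lemma shift_sum (n : ℕ) (hn : 0 < n) (f : ℤ → ℝ) (hf : ∀ x : ℤ, f x = f (x % (n : ℤ)))
    (c : ℤ) : ∑ j ∈ Finset.range n, f (c + j) = ∑ j ∈ Finset.range n, f j := by
  have hn' : (0 : ℤ) < n := by exact_mod_cast hn
  refine Finset.sum_nbij' (fun a => ((c + a) % n).toNat) (fun a => (((a : ℤ) - c) % n).toNat)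
    ?_ ?_ ?_ ?_ ?_
  · intro a _
    have h1 := Int.emod_nonneg (c + a) (ne_of_gt hn')
    have h2 := Int.emod_lt_of_pos (c + a) hn'
    simp only [Finset.mem_range]
    omega
  · intro a _
    have h1 := Int.emod_nonneg ((a : ℤ) - c) (ne_of_gt hn')
    have h2 := Int.emod_lt_of_pos ((a : ℤ) - c) hn'
    simp only [Finset.mem_range]
    omega
  · intro a ha
    simp only [Finset.mem_range] at ha
    have h1 := Int.emod_nonneg (c + a) (ne_of_gt hn')
    have h2 := Int.emod_lt_of_pos (c + a) hn'
    have hc : ((((c + a) % n).toNat : ℤ)) = (c + a) % n := Int.toNat_of_nonneg h1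
    have key : ((c + a) % n - c) % n = (a : ℤ) % n := by
      rw [Int.sub_emod, Int.emod_emod_of_dvd _ dvd_rfl, ← Int.sub_emod, add_sub_cancel_left]
    have ha' : (a : ℤ) % n = a := Int.emod_eq_of_lt (by positivity) (by exact_mod_cast ha)
    rw [hc, key, ha']
    omega
  · intro a ha
    simp only [Finset.mem_range] at ha
    have h1 := Int.emod_nonneg ((a : ℤ) - c) (ne_of_gt hn')
    have hc : (((((a : ℤ) - c) % n).toNat : ℤ)) = ((a : ℤ) - c) % n := Int.toNat_of_nonneg h1
    have key : (c + ((a : ℤ) - c) % n) % n = (a : ℤ) % n := by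
      rw [Int.add_emod c, Int.emod_emod_of_dvd _ dvd_rfl, ← Int.add_emod, add_sub_cancel]
    have ha' : (a : ℤ) % n = a := Int.emod_eq_of_lt (by positivity) (by exact_mod_cast ha)
    rw [hc, key, ha']
    omega
  · intro a _
    have h1 := Int.emod_nonneg (c + a) (ne_of_gt hn')
    have hc : ((((c + a) % n).toNat : ℤ)) = (c + a) % n := Int.toNat_of_nonneg h1
    rw [hf (c + a), ← hc]
    rfl

lemma corr_shift (R : ℤ) (hR : 1 ≤ R) (a b : ℤ) :
    ∑ j ∈ Finset.range R.toNat, gg R (a - b + j) * gg R j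
      = ∑ j ∈ Finset.range R.toNat, gg R (a + j) * gg R (b + j) := by
  have hRt : ((R.toNat : ℤ)) = R := by omega
  have hadd : ∀ c x : ℤ, gg R (c + x) = gg R (c + x % R) := by
    intro c x
    rw [gg_periodic R (c + x), gg_periodic R (c + x % R),
      Int.add_emod c x, Int.add_emod c (x % R), Int.emod_emod_of_dvd _ dvd_rfl]
  have := shift_sum R.toNat (by omega) (fun x => gg R (a + x) * gg R (b + x))
    (by intro x; rw [hRt, ← hadd a x, ← hadd b x]) (-b)
  calc ∑ j ∈ Finset.range R.toNat, gg R (a - b + j) * gg R j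
      = ∑ j ∈ Finset.range R.toNat, gg R (a + (-b + j)) * gg R (b + (-b + j)) := by
        refine Finset.sum_congr rfl fun j _ => ?_
        rw [show a + (-b + (j : ℤ)) = a - b + j by ring, show b + (-b + (j : ℤ)) = (j : ℤ) by ring]
    _ = ∑ j ∈ Finset.range R.toNat, gg R (a + j) * gg R (b + j) := this

lemma sumA (r R : ℤ) (n : ℕ) :
    3 * ∑ j ∈ Finset.range n, (2 * (r + j) - R + 1) * (2 * (j : ℤ) - R + 1)
      = 2*n*(n-1)*(2*n-1) + 6*(r-R+1)*n*(n-1) + 3*(2*r-R+1)*(1-R)*n := by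
  induction n with
  | zero => simp
  | succ n ih =>
    rw [Finset.sum_range_succ, mul_add, ih]; push_cast; ring

lemma sumB (R : ℤ) (n : ℕ) :
    ∑ j ∈ Finset.range n, (2 * (j : ℤ) - R + 1) = n * n - n * R := by
  induction n with
  | zero => simp
  | succ n ih =>
    rw [Finset.sum_range_succ, ih]; push_cast; ring

lemma intS (R r : ℕ) (h : r < R) :
    3 * ∑ j ∈ Finset.range R, (2 * (((r : ℤ) + j) % R) - R + 1) * (2 * (j : ℤ) - R + 1)
      = 6*r^2*R - 6*r*R^2 + R^3 - R := by
  have hsplit : ∑ j ∈ Finset.range R, (2 * (((r : ℤ) + j) % R) - R + 1) * (2 * (j : ℤ) - R + 1)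
      = ∑ j ∈ Finset.Ico 0 (R - r), (2 * (((r : ℤ) + j) % R) - R + 1) * (2 * (j : ℤ) - R + 1)
        + ∑ j ∈ Finset.Ico (R - r) R, (2 * (((r : ℤ) + j) % R) - R + 1) * (2 * (j : ℤ) - R + 1) := by
    rw [Finset.range_eq_Ico, Finset.sum_Ico_consecutive _ (Nat.zero_le _) (by omega)]
  have h1 : ∑ j ∈ Finset.Ico 0 (R - r), (2 * (((r : ℤ) + j) % R) - R + 1) * (2 * (j : ℤ) - R + 1)
      = ∑ j ∈ Finset.Ico 0 (R - r), (2 * ((r : ℤ) + j) - R + 1) * (2 * (j : ℤ) - R + 1) := by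
    refine Finset.sum_congr rfl fun j hj => ?_
    simp only [Finset.mem_Ico] at hj
    rw [Int.emod_eq_of_lt (by positivity) (by push_cast; omega)]
  have h2 : ∑ j ∈ Finset.Ico (R - r) R, (2 * (((r : ℤ) + j) % R) - R + 1) * (2 * (j : ℤ) - R + 1)
      = ∑ j ∈ Finset.Ico (R - r) R,
          ((2 * ((r : ℤ) + j) - R + 1) * (2 * (j : ℤ) - R + 1)
            - 2 * R * (2 * (j : ℤ) - R + 1)) := by
    refine Finset.sum_congr rfl fun j hj => ?_
    simp only [Finset.mem_Ico] at hj
    have hmod : ((r : ℤ) + j) % R = (r : ℤ) + j - R := by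
      have : ((r : ℤ) + j - R) % R = ((r : ℤ) + j) % R := by
        rw [Int.sub_emod, Int.emod_self, sub_zero, Int.emod_emod_of_dvd _ dvd_rfl]
      rw [← this, Int.emod_eq_of_lt (by push_cast; omega) (by push_cast; omega)]
    rw [hmod]; ring
  have h3 : ∑ j ∈ Finset.Ico 0 (R - r), (2 * ((r : ℤ) + j) - R + 1) * (2 * (j : ℤ) - R + 1)
      + ∑ j ∈ Finset.Ico (R - r) R, (2 * ((r : ℤ) + j) - R + 1) * (2 * (j : ℤ) - R + 1)
      = ∑ j ∈ Finset.range R, (2 * ((r : ℤ) + j) - R + 1) * (2 * (j : ℤ) - R + 1) := by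
    rw [Finset.range_eq_Ico]
    exact Finset.sum_Ico_consecutive _ (Nat.zero_le _) (by omega)
  have h4 : ∑ j ∈ Finset.Ico (R - r) R, (2 * (j : ℤ) - R + 1)
      = ∑ j ∈ Finset.range R, (2 * (j : ℤ) - R + 1)
        - ∑ j ∈ Finset.range (R - r), (2 * (j : ℤ) - R + 1) := by
    exact Finset.sum_Ico_eq_sub _ (by omega)
  rw [hsplit, h1, h2, Finset.sum_sub_distrib, ← Finset.mul_sum]
  have hA := sumA r R R
  have hB1 := sumB R R
  have hB2 := sumB R (R - r)
  have hcast : ((R - r : ℕ) : ℤ) = (R : ℤ) - r := by omega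
  rw [hcast] at hB2
  have h3' := h3
  rw [h4, hB1, hB2]
  nlinarith [hA, h3', sq_nonneg ((r:ℤ) + R)]

lemma key (R : ℤ) (hR : 1 ≤ R) (k : ℤ) :
    B2 ((k : ℝ) / R) = 1 / (6 * (R : ℝ) ^ 2)
      + (2 / R) * ∑ j ∈ Finset.range R.toNat, gg R (k + j) * gg R j := by
  have hR0 : (0 : ℝ) < R := by exact_mod_cast hR
  set r : ℤ := k % R with hrdef
  clear_value r
  have hr0 : 0 ≤ r := hrdef ▸ Int.emod_nonneg k (by omega)
  have hrR : r < R := hrdef ▸ Int.emod_lt_of_pos k (by omega)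
  -- fractional part
  have hfr : Int.fract ((k : ℝ) / R) = (r : ℝ) / R := by
    have hRne : (R : ℝ) ≠ 0 := ne_of_gt hR0
    have hk : (k : ℝ) / R = (k / R : ℤ) + (r : ℝ) / R := by
      have h : (k : ℝ) = R * ((k / R : ℤ) : ℝ) + r := by
        rw [hrdef]; exact_mod_cast (Int.mul_ediv_add_emod k R).symm
      rw [h]
      field_simp
    rw [hk, Int.fract_intCast_add, Int.fract_eq_self.2
      ⟨by positivity, by rw [div_lt_one hR0]; exact_mod_cast hrR⟩]
  -- shift the sum to r
  have hshift : ∑ j ∈ Finset.range R.toNat, gg R (k + j) * gg R j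
      = ∑ j ∈ Finset.range R.toNat, gg R (r + j) * gg R j := by
    refine Finset.sum_congr rfl fun j hj => ?_
    have : (k + j) % R = (r + j) % R := by
      rw [hrdef]; exact (Int.emod_add_emod k R (j:ℤ)).symm
    rw [gg_periodic R (k + j), gg_periodic R (r + j), this]
  -- sum as integer sum
  have hsum : ∑ j ∈ Finset.range R.toNat, gg R (r + j) * gg R j
      = ((∑ j ∈ Finset.range R.toNat,
          (2 * ((r + j) % R) - R + 1) * (2 * (j : ℤ) - R + 1) : ℤ) : ℝ) / (4 * (R : ℝ) ^ 2) := by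
    push_cast
    rw [Finset.sum_div]
    refine Finset.sum_congr rfl fun j hj => ?_
    simp only [Finset.mem_range] at hj
    have hjR : (j : ℤ) < R := by omega
    have hjmod : (j : ℤ) % R = j := Int.emod_eq_of_lt (by positivity) hjR
    unfold gg
    rw [hjmod]
    push_cast
    ring
  have hS := intS R.toNat r.toNat (by omega)
  rw [show ((R.toNat : ℤ)) = R by omega, show ((r.toNat : ℤ)) = r by omega] at hS
  have hScast : (3 : ℝ) * (∑ j ∈ Finset.range R.toNat,
      (2 * ((r + j) % R) - R + 1) * (2 * (j : ℤ) - R + 1) : ℤ)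
      = 6*(r:ℝ)^2*R - 6*r*(R:ℝ)^2 + (R:ℝ)^3 - R := by
    exact_mod_cast congrArg (Int.cast : ℤ → ℝ) hS
  have hX : ((∑ j ∈ Finset.range R.toNat,
      (2 * ((r + j) % R) - R + 1) * (2 * (j : ℤ) - R + 1) : ℤ) : ℝ)
      = (6*(r:ℝ)^2*R - 6*r*(R:ℝ)^2 + (R:ℝ)^3 - R) / 3 := by
    rw [eq_div_iff (by norm_num : (3:ℝ) ≠ 0)]
    linarith [hScast]
  unfold B2
  rw [hfr, hshift, hsum, hX]
  have hRne : (R : ℝ) ≠ 0 := ne_of_gt hR0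
  field_simp
  ring

/-- a Fejér-kernel type estimate for averages of `B₂` over
differences of distinct elements of a finite set `T ⊂ (1/R)·ℤ` of cardinality
`N ≥ 2`. -/
theorem avg_B2_lower_bound (R : ℤ) (hR : 1 ≤ R) (T : Finset ℚ)
    (hT : ∀ t ∈ T, ∃ k : ℤ, t = (k : ℚ) / R) (hN : 2 ≤ T.card) :
    (1 / ((T.card : ℝ) ^ 2 - T.card)) *
        ∑ p ∈ T.offDiag, B2 ((p.1 - p.2 : ℚ) : ℝ)
      ≥ 1 / (6 * (R : ℝ) ^ 2) - 1 / (6 * ((T.card : ℝ) - 1)) := by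
  have hR0 : (0 : ℝ) < (R : ℝ) := by exact_mod_cast hR
  have hRq : ((R : ℚ)) ≠ 0 := by
    have : (0 : ℤ) < R := by omega
    exact_mod_cast this.ne'
  set N : ℕ := T.card with hNdef
  -- integer representative
  set k : ℚ → ℤ := fun t => (t * R).num with hkdef
  have hk : ∀ t ∈ T, t = (k t : ℚ) / R := by
    intro t ht
    obtain ⟨m, hm⟩ := hT t ht
    have h1 : t * R = (m : ℚ) := by rw [hm]; field_simp
    have : k t = m := by rw [hkdef]; simp [h1]
    rw [this, hm]
  -- pointwise formula
  have hpt : ∀ s ∈ T, ∀ t ∈ T, B2 ((s - t : ℚ) : ℝ)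
      = 1 / (6 * (R : ℝ) ^ 2)
        + (2 / R) * ∑ j ∈ Finset.range R.toNat, gg R (k s + j) * gg R (k t + j) := by
    intro s hs t ht
    have hs1 : s * (R : ℚ) = ((k s : ℤ) : ℚ) := by
      conv_lhs => rw [hk s hs]
      field_simp
    have ht1 : t * (R : ℚ) = ((k t : ℤ) : ℚ) := by
      conv_lhs => rw [hk t ht]
      field_simp
    have hq' : (s - t : ℚ) = ((k s - k t : ℤ) : ℚ) / R := by
      rw [eq_div_iff hRq]
      push_cast
      linear_combination hs1 - ht1
    have hq : ((s - t : ℚ) : ℝ) = ((k s - k t : ℤ) : ℝ) / R := by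
      rw [hq']
      push_cast
      ring
    rw [hq, key R hR (k s - k t), corr_shift R hR (k s) (k t)]
  -- full double sum lower bound
  have hfull : ((N : ℝ)) ^ 2 / (6 * (R : ℝ) ^ 2)
      ≤ ∑ p ∈ T ×ˢ T, B2 ((p.1 - p.2 : ℚ) : ℝ) := by
    have heq : ∑ p ∈ T ×ˢ T, B2 ((p.1 - p.2 : ℚ) : ℝ)
        = (N : ℝ) ^ 2 * (1 / (6 * (R : ℝ) ^ 2))
          + (2 / R) * ∑ j ∈ Finset.range R.toNat, (∑ t ∈ T, gg R (k t + j)) ^ 2 := by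
      rw [Finset.sum_product]
      have step1 : ∀ s ∈ T, ∑ t ∈ T, B2 ((s - t : ℚ) : ℝ)
          = (N : ℝ) * (1 / (6 * (R : ℝ) ^ 2))
            + (2 / R) * ∑ t ∈ T, ∑ j ∈ Finset.range R.toNat, gg R (k s + j) * gg R (k t + j) := by
        intro s hs
        rw [Finset.sum_congr rfl (fun t ht => hpt s hs t ht), Finset.sum_add_distrib,
          Finset.sum_const, ← Finset.mul_sum, nsmul_eq_mul, ← hNdef]
      rw [Finset.sum_congr rfl step1, Finset.sum_add_distrib, Finset.sum_const, ← Finset.mul_sum]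
      have swap : ∑ s ∈ T, ∑ t ∈ T, ∑ j ∈ Finset.range R.toNat, gg R (k s + j) * gg R (k t + j)
          = ∑ j ∈ Finset.range R.toNat, (∑ t ∈ T, gg R (k t + j)) ^ 2 := by
        calc ∑ s ∈ T, ∑ t ∈ T, ∑ j ∈ Finset.range R.toNat, gg R (k s + j) * gg R (k t + j)
            = ∑ s ∈ T, ∑ j ∈ Finset.range R.toNat, ∑ t ∈ T, gg R (k s + j) * gg R (k t + j) :=
              Finset.sum_congr rfl fun s _ => Finset.sum_comm
          _ = ∑ j ∈ Finset.range R.toNat, ∑ s ∈ T, ∑ t ∈ T, gg R (k s + j) * gg R (k t + j) :=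
              Finset.sum_comm
          _ = ∑ j ∈ Finset.range R.toNat, (∑ t ∈ T, gg R (k t + j)) ^ 2 := by
              refine Finset.sum_congr rfl fun j _ => ?_
              rw [sq, Finset.sum_mul_sum]
      rw [swap, nsmul_eq_mul, ← hNdef]
      ring
    rw [heq]
    have hrw : ((N : ℝ)) ^ 2 * (1 / (6 * (R : ℝ) ^ 2)) = (N : ℝ) ^ 2 / (6 * (R : ℝ) ^ 2) := by
      ring
    have h2 : 0 ≤ (2 / (R : ℝ)) * ∑ j ∈ Finset.range R.toNat, (∑ t ∈ T, gg R (k t + j)) ^ 2 := by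
      apply mul_nonneg (by positivity)
      exact Finset.sum_nonneg fun j _ => sq_nonneg _
    linarith
  -- diagonal
  have hdiag : ∑ p ∈ T ×ˢ T, B2 ((p.1 - p.2 : ℚ) : ℝ)
      = ∑ p ∈ T.offDiag, B2 ((p.1 - p.2 : ℚ) : ℝ) + (N : ℝ) * (1 / 6) := by
    rw [← Finset.diag_union_offDiag T, Finset.sum_union (Finset.disjoint_diag_offDiag T),
      Finset.sum_diag, add_comm]
    congr 1
    have : ∀ t ∈ T, B2 (((t - t : ℚ)) : ℝ) = 1 / 6 := by
      intro t _
      simp [B2]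
    rw [Finset.sum_congr rfl this, Finset.sum_const]
    simp [hNdef, mul_comm]
  -- final arithmetic
  have hN2 : (2 : ℝ) ≤ (N : ℝ) := by exact_mod_cast hN
  have hNpos : (0 : ℝ) < (N : ℝ) ^ 2 - N := by nlinarith
  have hD : (N : ℝ) ^ 2 / (6 * (R : ℝ) ^ 2) - (N : ℝ) / 6
      ≤ ∑ p ∈ T.offDiag, B2 ((p.1 - p.2 : ℚ) : ℝ) := by
    rw [hdiag] at hfull
    linarith
  have hrw2 : (1 / ((N : ℝ) ^ 2 - N)) * ∑ p ∈ T.offDiag, B2 ((p.1 - p.2 : ℚ) : ℝ)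
      = (∑ p ∈ T.offDiag, B2 ((p.1 - p.2 : ℚ) : ℝ)) / ((N : ℝ) ^ 2 - N) := by ring
  rw [ge_iff_le, hrw2, le_div_iff₀ hNpos]
  have hkey1 : (1 / (6 * ((N:ℝ) - 1))) * ((N:ℝ)^2 - N) = (N : ℝ) / 6 := by
    rw [div_mul_eq_mul_div, div_eq_div_iff (by nlinarith) (by norm_num)]
    ring
  have hkey2 : (1 / (6 * (R:ℝ)^2)) * ((N:ℝ)^2 - N) ≤ (N:ℝ)^2 / (6 * (R:ℝ)^2) := by
    rw [div_mul_eq_mul_div, div_le_div_iff₀ (by positivity) (by positivity)]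
    nlinarith
  nlinarith
end

section
/- Let α, β, n be positive real numbers satisfying n² ≥ β/α, and let e₀, e₁, …, e_r be positive real numbers with e₀ = max{e₀, …, e_r} and e₀ + e₁ + ⋯ + e_r = n. Then α·e₀ + β·∑_{i=1}^{r} (1/eᵢ) ≥ (α²·β·n)^{1/3}. -/
/-- a Hölder-type inequality: if `n² ≥ β/α`, `e₀ = max eᵢ` and
`∑ eᵢ = n`, then `α·e₀ + β·∑_{i=1}^r 1/eᵢ ≥ (α²βn)^{1/3}`. -/
theorem holder_type_inequality (α β n : ℝ) (hα : 0 < α) (hβ : 0 < β) (hn : 0 < n)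
    (hn2 : β / α ≤ n ^ 2) (r : ℕ) (e : Fin (r + 1) → ℝ)
    (he : ∀ i, 0 < e i) (hmax : ∀ i, e i ≤ e 0) (hsum : ∑ i, e i = n) :
    (α ^ 2 * β * n) ^ ((1 : ℝ) / 3) ≤
      α * e 0 + β * ∑ i ∈ Finset.univ.erase (0 : Fin (r + 1)), 1 / e i := by
  set t := e 0 with ht_def
  have ht : 0 < t := he 0
  have htn : t ≤ n := by
    rw [← hsum]
    exact Finset.single_le_sum (fun i _ => (he i).le) (Finset.mem_univ 0)
  have hrest : ∑ i ∈ Finset.univ.erase (0 : Fin (r + 1)), e i = n - t := by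
    have := Finset.add_sum_erase Finset.univ e (Finset.mem_univ (0 : Fin (r + 1)))
    linarith [this.symm ▸ hsum]
  have hβα : β ≤ α * n ^ 2 := by
    rw [div_le_iff₀ hα] at hn2; linarith
  set S := ∑ i ∈ Finset.univ.erase (0 : Fin (r + 1)), 1 / e i with hS_def
  have hS : (n - t) / t ^ 2 ≤ S := by
    have h1 : ∑ i ∈ Finset.univ.erase (0 : Fin (r + 1)), e i / t ^ 2 ≤ S := by
      apply Finset.sum_le_sum
      intro i _
      rw [div_le_div_iff₀ (by positivity) (he i)]
      have := hmax i
      nlinarith [he i]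
    calc (n - t) / t ^ 2 = ∑ i ∈ Finset.univ.erase (0 : Fin (r + 1)), e i / t ^ 2 := by
          rw [← Finset.sum_div, hrest]
      _ ≤ S := h1
  set c : ℝ := (α ^ 2 * β * n) ^ ((1 : ℝ) / 3) with hc_def
  have hcpos : 0 < c := Real.rpow_pos_of_pos (by positivity) _
  have hc3 : c ^ 3 = α ^ 2 * β * n := by
    rw [hc_def, ← Real.rpow_natCast (_ ^ ((1:ℝ)/3)) 3, ← Real.rpow_mul (by positivity)]
    norm_num
  have hcn : c ≤ α * n := by
    by_contra h
    push_neg at h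
    have : (α * n) ^ 3 < c ^ 3 := by
      apply pow_lt_pow_left₀ h (by positivity)
      norm_num
    nlinarith [mul_le_mul_of_nonneg_left hβα (le_of_lt (by positivity : (0:ℝ) < α^2*n))]
  -- key inequality: c * t^2 ≤ α * t^3 + β * (n - t)
  have key : c * t ^ 2 ≤ α * t ^ 3 + β * (n - t) := by
    rcases le_or_gt c (α * t) with h | h
    · nlinarith [mul_nonneg (sub_nonneg.2 h) (sq_nonneg t)]
    · rcases le_or_gt β (α * t ^ 2) with h2 | h2
      · -- α² * g = c*(c² - α²t²) + α²*t*(αt² - β)  ≥ 0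
        nlinarith [mul_nonneg (mul_nonneg hcpos.le (sub_nonneg.2 h.le))
            (add_pos (mul_pos hα ht) hcpos).le,
          mul_nonneg (mul_nonneg (sq_nonneg α) ht.le) (sub_nonneg.2 h2), mul_pos hα hα,
          sq_nonneg (c - α*t), sq_nonneg (c + α*t)]
      · -- α * g = (αt - c)(αt² - β) + β(αn - c) ≥ 0
        nlinarith [mul_nonneg (sub_nonneg.2 h.le) (sub_nonneg.2 h2.le),
          mul_nonneg hβ.le (sub_nonneg.2 hcn)]
  have key2 : c ≤ α * t + β * ((n - t) / t ^ 2) := by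
    have ht2 : (0:ℝ) < t ^ 2 := by positivity
    rw [← sub_nonneg]
    have : α * t + β * ((n - t) / t ^ 2) - c = (α * t ^ 3 + β * (n - t) - c * t ^ 2) / t ^ 2 := by
      field_simp
    rw [this]
    exact div_nonneg (by linarith) ht2.le
  have : β * ((n - t) / t ^ 2) ≤ β * S := by
    exact mul_le_mul_of_nonneg_left hS hβ.le
  linarith
end

section
/- Fix n ∈ ℤ^g and u ∈ (Kˣ)^g. Assume that the family m ↦ (ᵀm⋆q⋆m)·(ᵀm⋆u) over m ∈ ℤ^g is summable, and likewise for the argument u·(q⋆2n) (componentwise product). Then θ(u·(q⋆2n), q) = (ᵀn⋆q⋆n)⁻¹ · (ᵀn⋆u)⁻¹ · θ(u, q). -/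
open scoped BigOperators

variable {K : Type*} [NormedField K] {g : ℕ}

/-- `ᵀm⋆u = ∏ₖ uₖ^{mₖ}`. -/
noncomputable def tstar (u : Fin g → Kˣ) (m : Fin g → ℤ) : Kˣ :=
  ∏ k, u k ^ m k

/-- `ᵀm⋆q⋆n = ∏_{i,j} q_{ij}^{mᵢ·nⱼ}`. -/
noncomputable def qform (q : Matrix (Fin g) (Fin g) Kˣ) (m n : Fin g → ℤ) : Kˣ :=
  ∏ i, ∏ j, q i j ^ (m i * n j)

/-- `q⋆n` is the vector whose `i`-th entry is `∏ⱼ q_{ij}^{nⱼ}`. -/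
noncomputable def qstar (q : Matrix (Fin g) (Fin g) Kˣ) (n : Fin g → ℤ) : Fin g → Kˣ :=
  fun i => ∏ j, q i j ^ n j

/-- The theta series `θ(u, q) = ∑_{m ∈ ℤ^g} (ᵀm⋆q⋆m)·(ᵀm⋆u)`. -/
noncomputable def theta (u : Fin g → Kˣ) (q : Matrix (Fin g) (Fin g) Kˣ) : K :=
  ∑' m : Fin g → ℤ, ((qform q m m : K) * (tstar u m : K))

lemma tstar_mul (u v : Fin g → Kˣ) (m : Fin g → ℤ) :
    tstar (fun i => u i * v i) m = tstar u m * tstar v m := by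
  simp [tstar, mul_zpow, Finset.prod_mul_distrib]

lemma tstar_add (u : Fin g → Kˣ) (m n : Fin g → ℤ) :
    tstar u (m + n) = tstar u m * tstar u n := by
  simp [tstar, zpow_add, Finset.prod_mul_distrib]

lemma qform_add_left (q : Matrix (Fin g) (Fin g) Kˣ) (m n p : Fin g → ℤ) :
    qform q (m + n) p = qform q m p * qform q n p := by
  simp [qform, add_mul, zpow_add, Finset.prod_mul_distrib]

lemma qform_add_right (q : Matrix (Fin g) (Fin g) Kˣ) (m n p : Fin g → ℤ) :
    qform q m (n + p) = qform q m n * qform q m p := by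
  simp [qform, mul_add, zpow_add, Finset.prod_mul_distrib]

lemma qform_comm (q : Matrix (Fin g) (Fin g) Kˣ) (hq : ∀ i j, q i j = q j i)
    (m n : Fin g → ℤ) : qform q m n = qform q n m := by
  rw [qform, Finset.prod_comm]
  refine Finset.prod_congr rfl fun j _ => Finset.prod_congr rfl fun i _ => ?_
  rw [hq i j, mul_comm]

lemma tstar_qstar (q : Matrix (Fin g) (Fin g) Kˣ) (w m : Fin g → ℤ) :
    tstar (qstar q w) m = qform q m w := by
  unfold tstar qstar qform
  refine Finset.prod_congr rfl fun i _ => ?_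
  rw [← Finset.prod_zpow]
  exact Finset.prod_congr rfl fun j _ => by rw [← zpow_mul, mul_comm]

/-- transformation of the theta series under translation of the
argument by a period `q⋆2n`:
`θ(u·(q⋆2n), q) = (ᵀn⋆q⋆n)⁻¹·(ᵀn⋆u)⁻¹·θ(u, q)`. -/
theorem theta_transformation {K : Type*} [NormedField K] [CompleteSpace K]
    (hna : IsNonarchimedean (norm : K → ℝ))
    (g : ℕ) (hg : 1 ≤ g)
    (q : Matrix (Fin g) (Fin g) Kˣ) (hq : ∀ i j, q i j = q j i)
    (n : Fin g → ℤ) (u : Fin g → Kˣ)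
    (hsum : Summable (fun m : Fin g → ℤ => ((qform q m m : K) * (tstar u m : K))))
    (hsum' : Summable (fun m : Fin g → ℤ =>
      ((qform q m m : K) *
        (tstar (fun i => u i * qstar q (fun j => 2 * n j) i) m : K)))) :
    theta (fun i => u i * qstar q (fun j => 2 * n j) i) q
      = (((qform q n n)⁻¹ : Kˣ) : K) * (((tstar u n)⁻¹ : Kˣ) : K) * theta u q := by
  have h2n : (fun j => 2 * n j) = n + n := funext fun j => two_mul (n j)
  have key : ∀ m : Fin g → ℤ,
      qform q n n * tstar u n
          * (qform q m m * tstar (fun i => u i * qstar q (fun j => 2 * n j) i) m)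
        = qform q (m + n) (m + n) * tstar u (m + n) := by
    intro m
    rw [tstar_mul, tstar_qstar, h2n, qform_add_right, tstar_add, qform_add_left,
      qform_add_right, qform_add_right, qform_comm q hq n m]
    ac_rfl
  have keyK : ∀ m : Fin g → ℤ,
      ((qform q m m : K) * (tstar (fun i => u i * qstar q (fun j => 2 * n j) i) m : K))
        = (((qform q n n)⁻¹ : Kˣ) : K) * (((tstar u n)⁻¹ : Kˣ) : K)
            * ((qform q (m + n) (m + n) : K) * (tstar u (m + n) : K)) := by
    intro m
    have h := congrArg (Units.val) (key m)
    simp only [Units.val_mul, Units.val_inv_eq_inv_val] at h ⊢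
    have ha : ((qform q n n : Kˣ) : K) ≠ 0 := Units.ne_zero _
    have hb : ((tstar u n : Kˣ) : K) ≠ 0 := Units.ne_zero _
    field_simp
    linear_combination h
  unfold theta
  rw [tsum_congr keyK, tsum_mul_left]
  congr 1
  exact (Equiv.addRight n).tsum_eq (fun m => (qform q m m : K) * (tstar u m : K))
end
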